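/- With P(1) = p and P(n+1) = (pq)^n C_{n−1} for n ≥ 1 (p + q = 1, 0 < q < 1/2), the expectation ∑_{n≥1} n·P(n) equals (p − q + pq)/(p − q). -/

import Mathlib

/-!
Put `x = pq`, `S = ∑ Cₙ xⁿ` and `T = ∑ n Cₙ xⁿ`; both converge because `Cₙ ≤ 4ⁿ` and
`4pq < (p + q)² = 1`. Segner's recurrence gives `x S² + 1 = S`, whose roots are `1/p` and `1/q`,
and `(n + 2) Cₙ₊₁ = 2 (2n + 1) Cₙ` gives `(1 - 4x) T = 1 - (1 - 2x) S`. Since `T ≥ 0`, this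
excludes `S = 1/q` when `q < p`, so `S = 1/p` and `T = q / (p (p - q))`. The expectation is
`p + x (T + 2S)`.
-/

noncomputable def lsmCycleProb (p q : ℝ) (n : ℕ) : ℝ :=
  if n = 1 then p else (p * q) ^ (n - 1) * (catalan (n - 2) : ℝ)

open Finset

theorem catalan_le_four_pow (n : ℕ) : catalan n ≤ 4 ^ n :=
  calc catalan n ≤ (n + 1) * catalan n := Nat.le_mul_of_pos_left _ n.succ_pos
    _ = n.centralBinom := succ_mul_catalan_eq_centralBinom n
    _ ≤ 4 ^ n := Nat.centralBinom_le_four_pow n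

theorem succ_succ_mul_catalan_succ (n : ℕ) :
    (n + 2) * catalan (n + 1) = 2 * (2 * n + 1) * catalan n := by
  refine Nat.eq_of_mul_eq_mul_left n.succ_pos ?_
  calc (n + 1) * ((n + 2) * catalan (n + 1)) = (n + 1) * (n + 1).centralBinom := by
        rw [← succ_mul_catalan_eq_centralBinom]
    _ = (n + 1) * (2 * (2 * n + 1) * catalan n) := by
        rw [Nat.succ_mul_centralBinom_succ, ← succ_mul_catalan_eq_centralBinom]; ring

section CatalanSeries

variable {x : ℝ}

theorem summable_nat_mul_catalan_mul_pow (hx : 4 * |x| < 1) :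
    Summable fun n : ℕ => (n : ℝ) * ((catalan n : ℝ) * x ^ n) := by
  refine .of_norm_bounded (summable_pow_mul_geometric_of_norm_lt_one 1 (r := 4 * |x|)
    (by rwa [Real.norm_of_nonneg (by positivity)])) fun n => ?_
  rw [norm_mul, norm_mul, norm_pow, Real.norm_natCast, Real.norm_natCast, Real.norm_eq_abs,
    pow_one, mul_pow]
  gcongr
  exact_mod_cast catalan_le_four_pow n

theorem summable_catalan_mul_pow (hx : 4 * |x| < 1) :
    Summable fun n : ℕ => (catalan n : ℝ) * x ^ n := by
  refine .of_norm_bounded (summable_geometric_of_lt_one (r := 4 * |x|) (by positivity) hx)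
    fun n => ?_
  rw [norm_mul, norm_pow, Real.norm_natCast, Real.norm_eq_abs, mul_pow]
  gcongr
  exact_mod_cast catalan_le_four_pow n

theorem mul_tsum_catalan_mul_pow_sq_add_one (hx : 4 * |x| < 1) :
    x * (∑' n : ℕ, (catalan n : ℝ) * x ^ n) ^ 2 + 1 = ∑' n : ℕ, (catalan n : ℝ) * x ^ n := by
  set a : ℕ → ℝ := fun n => (catalan n : ℝ) * x ^ n
  have ha : Summable a := summable_catalan_mul_pow hx
  have ha_norm : Summable fun n => ‖a n‖ := by
    simpa only [Real.norm_eq_abs] using summable_abs_iff.mpr ha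
  have ha_succ (n : ℕ) : a (n + 1) = x * ∑ kl ∈ antidiagonal n, a kl.1 * a kl.2 := by
    simp only [a, catalan_succ', Nat.cast_sum, Nat.cast_mul, sum_mul, mul_sum]
    refine sum_congr rfl fun kl hkl => ?_
    rw [← mem_antidiagonal.mp hkl]
    ring
  conv_rhs => rw [ha.tsum_eq_zero_add]
  rw [sq, tsum_mul_tsum_eq_tsum_sum_antidiagonal_of_summable_norm ha_norm
    ha_norm, ← tsum_mul_left]
  simp only [ha_succ, a, catalan_zero]
  ring

theorem one_sub_four_mul_mul_tsum_nat_mul_catalan_mul_pow (hx : 4 * |x| < 1) :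
    (1 - 4 * x) * ∑' n : ℕ, (n : ℝ) * ((catalan n : ℝ) * x ^ n) =
      1 - (1 - 2 * x) * ∑' n : ℕ, (catalan n : ℝ) * x ^ n := by
  set a : ℕ → ℝ := fun n => (catalan n : ℝ) * x ^ n
  have ha : Summable a := summable_catalan_mul_pow hx
  have hna : Summable fun n : ℕ => (n : ℝ) * a n := summable_nat_mul_catalan_mul_pow hx
  have ha_succ (n : ℕ) : ((n + 1 : ℕ) + 1 : ℝ) * a (n + 1) = x * (4 * (n * a n) + 2 * a n) := by
    have h : ((n + 2 : ℕ) : ℝ) * catalan (n + 1) = 2 * (2 * n + 1) * catalan n := by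
      exact_mod_cast succ_succ_mul_catalan_succ n
    simp only [a, pow_succ]
    push_cast at h ⊢
    linear_combination x ^ n * x * h
  have hsum : ∑' n : ℕ, ((n : ℝ) + 1) * a n = ∑' n : ℕ, (n : ℝ) * a n + ∑' n, a n := by
    simp only [add_mul, one_mul]
    exact hna.tsum_add ha
  have hshift : ∑' n : ℕ, ((n : ℝ) + 1) * a n =
      1 + x * (4 * ∑' n : ℕ, (n : ℝ) * a n + 2 * ∑' n, a n) := by
    rw [Summable.tsum_eq_zero_add (by simpa only [add_mul, one_mul] using hna.add ha)]
    simp only [ha_succ]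
    rw [tsum_mul_left, (hna.mul_left 4).tsum_add (ha.mul_left 2), tsum_mul_left, tsum_mul_left]
    simp [a]
  linear_combination hshift - hsum

end CatalanSeries

section

variable {p q : ℝ}

theorem four_mul_abs_mul_lt_one (hpq : p + q = 1) (hq : 0 ≤ q) (hqp : q < p) :
    4 * |p * q| < 1 := by
  rw [abs_of_nonneg (by nlinarith)]
  nlinarith

theorem tsum_catalan_mul_pow_mul_eq_inv (hpq : p + q = 1) (hq : 0 ≤ q) (hqp : q < p) :
    ∑' n : ℕ, (catalan n : ℝ) * (p * q) ^ n = p⁻¹ := by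
  have hx := four_mul_abs_mul_lt_one hpq hq hqp
  have hquad := mul_tsum_catalan_mul_pow_sq_add_one hx
  have hT := one_sub_four_mul_mul_tsum_nat_mul_catalan_mul_pow hx
  have hx0 : 0 ≤ p * q := by nlinarith
  set S := ∑' n : ℕ, (catalan n : ℝ) * (p * q) ^ n
  set T := ∑' n : ℕ, (n : ℝ) * ((catalan n : ℝ) * (p * q) ^ n)
  have hroots : (p * S - 1) * (q * S - 1) = 0 := by
    linear_combination hquad - S * hpq
  have hS_le : (1 - 2 * (p * q)) * S ≤ 1 := by
    have hT_nonneg : 0 ≤ T := tsum_nonneg fun n => by positivity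
    nlinarith [le_abs_self (p * q)]
  rcases mul_eq_zero.mp hroots with h | h
  · exact (inv_eq_of_mul_eq_one_right (by linarith)).symm
  · nlinarith

theorem tsum_nat_mul_catalan_mul_pow_mul_eq (hpq : p + q = 1) (hq : 0 ≤ q) (hqp : q < p) :
    ∑' n : ℕ, (n : ℝ) * ((catalan n : ℝ) * (p * q) ^ n) = q / (p * (p - q)) := by
  have hT := one_sub_four_mul_mul_tsum_nat_mul_catalan_mul_pow (four_mul_abs_mul_lt_one hpq hq hqp)
  rw [tsum_catalan_mul_pow_mul_eq_inv hpq hq hqp] at hT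
  set T := ∑' n : ℕ, (n : ℝ) * ((catalan n : ℝ) * (p * q) ^ n)
  have hp : p ≠ 0 := by linarith
  have hpq' : p - q ≠ 0 := by linarith
  have hT' : p * (1 - 4 * (p * q)) * T = p - 1 + 2 * (p * q) := by
    field_simp at hT
    linear_combination hT
  rw [eq_div_iff (by positivity)]
  refine mul_left_cancel₀ hpq' ?_
  linear_combination hT' + (T * p * (p + q + 1) + q + 1) * hpq

end

theorem lsmCycleProb_succ_succ (p q : ℝ) (n : ℕ) :
    lsmCycleProb p q (n + 2) = (p * q) ^ (n + 1) * catalan n := by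
  simp [lsmCycleProb]

theorem lsmCycleProb_expectation (p q : ℝ) (hpq : p + q = 1)
    (hq0 : 0 < q) (hq : q < 1/2) :
    HasSum (fun n : ℕ => ((n : ℝ) + 1) * lsmCycleProb p q (n + 1))
      ((p - q + p * q) / (p - q)) := by
  have hqp : q < p := by linarith
  have hx := four_mul_abs_mul_lt_one hpq hq0.le hqp
  have hterm : (fun n : ℕ => (((n + 1 : ℕ) : ℝ) + 1) * lsmCycleProb p q (n + 1 + 1)) =
      fun n : ℕ => p * q * ((n : ℝ) * ((catalan n : ℝ) * (p * q) ^ n) +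
        2 * ((catalan n : ℝ) * (p * q) ^ n)) := by
    funext n
    rw [lsmCycleProb_succ_succ]
    push_cast
    ring
  have htail := ((summable_nat_mul_catalan_mul_pow hx).hasSum.add
    ((summable_catalan_mul_pow hx).hasSum.mul_left 2)).mul_left (p * q)
  rw [← hterm, tsum_nat_mul_catalan_mul_pow_mul_eq hpq hq0.le hqp,
    tsum_catalan_mul_pow_mul_eq_inv hpq hq0.le hqp] at htail
  have hsum := (hasSum_nat_add_iff (f := fun n : ℕ => ((n : ℝ) + 1) * lsmCycleProb p q (n + 1))
    1).mp htail
  have hfirst : ∑ i ∈ range 1, ((i : ℝ) + 1) * lsmCycleProb p q (i + 1) = p := by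
    simp [lsmCycleProb]
  have hvalue : p * q * (q / (p * (p - q)) + 2 * p⁻¹) + p = (p - q + p * q) / (p - q) := by
    have hp : p ≠ 0 := by linarith
    have hpq' : p - q ≠ 0 := by linarith
    field_simp
    linear_combination (p - q) * hpq
  rwa [hfirst, hvalue] at hsum
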